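/- For a QPSK symbol x with each real/imaginary component uniform on {±1/√2}, observed through an AWGN channel with SNR ρ = 1/v, the per-component MMSE is 1 − ∫ φ(z) tanh(ρ + √ρ z) dz (with φ the standard normal density), and this quantity lies strictly between 0 and 1 for every ρ > 0. -/

import Mathlib

/-! With `Y = ρ + √ρ Z ~ N(ρ, ρ)`, both halves of the MSE equal `E (1 - tanh Y)²` (the second
after `Z ↦ -Z`). The density of `N(v, v)` satisfies `p(-y) = e^{-2y} p(y)`, and
`e^{-2y} (1 + tanh y) = 1 - tanh y`, so substituting `y ↦ -y` shows `E[tanh Y (1 - tanh Y)] = 0`,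
i.e. `E tanh² Y = E tanh Y` (Nishimori identity). Expanding the square gives
`E (1 - tanh Y)² = 1 - E tanh Y`, and `0 < E tanh² Y`, `E tanh Y < 1` give the bounds. -/

open MeasureTheory ProbabilityTheory Real Set
open scoped NNReal

namespace Real

lemma continuous_tanh : Continuous tanh := by
  rw [show tanh = fun x => sinh x / cosh x from funext tanh_eq_sinh_div_cosh]
  exact continuous_sinh.div continuous_cosh fun x => (cosh_pos x).ne'

lemma tanh_eq_zero_iff {x : ℝ} : tanh x = 0 ↔ x = 0 :=
  tanh_injective.eq_iff' tanh_zero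

lemma exp_neg_two_mul_mul_one_add_tanh (x : ℝ) :
    exp (-2 * x) * (1 + tanh x) = 1 - tanh x := by
  have hprod : exp (-x) * exp x = 1 := by rw [← exp_add]; simp
  rw [tanh_eq, show -2 * x = -x + -x by ring, exp_add]
  field_simp
  linear_combination (2 * exp (-x)) * hprod

end Real

lemma integrable_comp_tanh {E : Type*} [NormedAddCommGroup E] (μ : Measure ℝ) [IsFiniteMeasure μ]
    {g : ℝ → E} (hg : Continuous g) : Integrable (fun x => g (tanh x)) μ := by
  obtain ⟨C, hC⟩ := isCompact_Icc.exists_bound_of_continuousOn (hg.continuousOn (s := Icc (-1) 1))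
  refine Integrable.of_bound (hg.comp continuous_tanh).aestronglyMeasurable C
    (ae_of_all _ fun x => hC _ ?_)
  exact ⟨(neg_one_lt_tanh x).le, (tanh_lt_one x).le⟩

lemma integral_tanh_lt_one (μ : Measure ℝ) [IsProbabilityMeasure μ] : ∫ x, tanh x ∂μ < 1 := by
  have hpos : 0 < ∫ x, (1 - tanh x) ∂μ := by
    rw [integral_pos_iff_support_of_nonneg (fun x => (sub_pos.2 (tanh_lt_one x)).le)
      (integrable_comp_tanh μ (g := fun t => 1 - t) (by fun_prop))]
    simp [Function.support_eq_univ fun x => (sub_pos.2 (tanh_lt_one x)).ne']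
  have htanh : Integrable tanh μ := integrable_comp_tanh μ continuous_id
  rw [integral_sub (integrable_const 1) htanh] at hpos
  simpa using hpos

namespace ProbabilityTheory

lemma integral_gaussianReal_zero_one {E : Type*} [NormedAddCommGroup E] [NormedSpace ℝ E]
    (f : ℝ → E) : ∫ x, f x ∂gaussianReal 0 1 = ∫ x, (exp (-x ^ 2 / 2) / √(2 * π)) • f x := by
  simp [integral_gaussianReal_eq_integral_smul, gaussianPDFReal, div_eq_inv_mul]

lemma gaussianPDFReal_neg (μ : ℝ) (v : ℝ≥0) (x : ℝ) :
    gaussianPDFReal μ v (-x) = exp (-2 * μ * x / v) * gaussianPDFReal μ v x := by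
  simp only [gaussianPDFReal, mul_left_comm _ (√(2 * π * v))⁻¹, ← exp_add]
  congr 2
  ring

lemma integral_comp_neg_gaussianReal {E : Type*} [NormedAddCommGroup E] [NormedSpace ℝ E]
    (μ : ℝ) {v : ℝ≥0} (hv : v ≠ 0) (f : ℝ → E) :
    ∫ x, f (-x) ∂gaussianReal μ v = ∫ x, exp (-2 * μ * x / v) • f x ∂gaussianReal μ v := by
  simp only [integral_gaussianReal_eq_integral_smul hv, smul_smul]
  rw [← integral_neg_eq_self]
  simp only [neg_neg, gaussianPDFReal_neg, mul_comm]

lemma gaussianReal_map_const_add_mul (μ : ℝ) (v : ℝ≥0) (a s : ℝ) :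
    (gaussianReal μ v).map (fun x => a + s * x) =
      gaussianReal (s * μ + a) (.mk (s ^ 2) (sq_nonneg _) * v) := by
  rw [← gaussianReal_map_const_add, ← gaussianReal_map_const_mul,
    Measure.map_map (by fun_prop) (by fun_prop)]
  rfl

lemma integral_comp_const_add_mul_gaussianReal {E : Type*} [NormedAddCommGroup E]
    [NormedSpace ℝ E] (μ : ℝ) (v : ℝ≥0) (a : ℝ) {s : ℝ} (hs : s ≠ 0) (f : ℝ → E) :
    ∫ x, f (a + s * x) ∂gaussianReal μ v =
      ∫ y, f y ∂gaussianReal (s * μ + a) (.mk (s ^ 2) (sq_nonneg _) * v) := by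
  have he : MeasurableEmbedding fun x => a + s * x :=
    ((Homeomorph.mulLeft₀ s hs).trans (Homeomorph.addLeft a)).measurableEmbedding
  rw [← gaussianReal_map_const_add_mul, he.integral_map]

lemma integral_comp_neg_gaussianReal_self {E : Type*} [NormedAddCommGroup E] [NormedSpace ℝ E]
    {v : ℝ≥0} (hv : v ≠ 0) (f : ℝ → E) :
    ∫ x, f (-x) ∂gaussianReal v v = ∫ x, exp (-2 * x) • f x ∂gaussianReal v v := by
  have hv' : (v : ℝ) ≠ 0 := NNReal.coe_ne_zero.2 hv
  simp only [integral_comp_neg_gaussianReal _ hv, mul_assoc, mul_div_assoc,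
    mul_div_cancel_left₀ _ hv']

lemma integral_tanh_sq_gaussianReal_self {v : ℝ≥0} (hv : v ≠ 0) :
    ∫ x, tanh x ^ 2 ∂gaussianReal v v = ∫ x, tanh x ∂gaussianReal v v := by
  have h := integral_comp_neg_gaussianReal_self hv fun x => tanh x * (1 + tanh x)
  simp only [smul_eq_mul, mul_left_comm _ (tanh _), exp_neg_two_mul_mul_one_add_tanh] at h
  simp only [tanh_neg, neg_mul, ← sub_eq_add_neg, integral_neg] at h
  have hzero : ∫ x, tanh x - tanh x ^ 2 ∂gaussianReal v v = 0 := by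
    simp only [← mul_one_sub, sq]
    linarith
  have htanh : Integrable tanh (gaussianReal v v) := integrable_comp_tanh _ continuous_id
  rwa [integral_sub htanh (integrable_comp_tanh _ (g := fun t => t ^ 2) (by fun_prop)),
    sub_eq_zero, eq_comm] at hzero

lemma integral_tanh_gaussianReal_self_pos {v : ℝ≥0} (hv : v ≠ 0) :
    0 < ∫ x, tanh x ∂gaussianReal v v := by
  have := nullSingletonClass_gaussianReal (μ := v) hv
  rw [← integral_tanh_sq_gaussianReal_self hv, integral_pos_iff_support_of_nonneg
    (fun x => sq_nonneg _) (integrable_comp_tanh _ (g := fun t => t ^ 2) (by fun_prop))]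
  have hsupp : Function.support (fun x => tanh x ^ 2) = {0}ᶜ := by
    ext x; simp [tanh_eq_zero_iff]
  simp [hsupp, prob_compl_eq_one_sub]

lemma integral_one_sub_tanh_sq_gaussianReal_self {v : ℝ≥0} (hv : v ≠ 0) :
    ∫ x, (1 - tanh x) ^ 2 ∂gaussianReal v v = 1 - ∫ x, tanh x ∂gaussianReal v v := by
  have htanh : Integrable tanh (gaussianReal v v) := integrable_comp_tanh _ continuous_id
  have htanh2 : Integrable (fun x => tanh x ^ 2) (gaussianReal v v) :=
    integrable_comp_tanh _ (g := fun t => t ^ 2) (by fun_prop)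
  have hexpand : ∀ x, (1 - tanh x) ^ 2 = 1 - 2 * tanh x + tanh x ^ 2 := fun x => by ring
  simp only [hexpand]
  have hlin : Integrable (fun x => 1 - 2 * tanh x) (gaussianReal v v) :=
    (integrable_const 1).sub (htanh.const_mul 2)
  rw [integral_add hlin htanh2,
    integral_sub (integrable_const 1) (htanh.const_mul 2), integral_const_mul,
    integral_tanh_sq_gaussianReal_self hv]
  simp only [integral_const, probReal_univ, smul_eq_mul, mul_one]
  ring

end ProbabilityTheory

/-- For a QPSK symbol over AWGN with SNR `ρ = 1/v`, the per-component MMSE of the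
posterior-mean (tanh) estimator equals `1 − ∫ φ(z) tanh(ρ + √ρ z) dz`, and this
quantity lies strictly between 0 and 1. -/
theorem stmt_8 (ρ : ℝ) (hρ : 0 < ρ) :
    let M : ℝ :=
      (1 / 2) * ∫ z, (1 - Real.tanh (ρ + Real.sqrt ρ * z)) ^ 2 ∂(gaussianReal 0 1) +
      (1 / 2) * ∫ z, (-1 - Real.tanh (-ρ + Real.sqrt ρ * z)) ^ 2 ∂(gaussianReal 0 1)
    M = 1 - ∫ z : ℝ, (Real.exp (-z ^ 2 / 2) / Real.sqrt (2 * Real.pi)) *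
          Real.tanh (ρ + Real.sqrt ρ * z) ∧
    0 < M ∧ M < 1 := by
  intro M
  set v : ℝ≥0 := ⟨ρ, hρ.le⟩
  have hv : v ≠ 0 := (NNReal.coe_ne_zero (r := v)).1 hρ.ne'
  have hlaw {s : ℝ} (hs : s ^ 2 = ρ) (f : ℝ → ℝ) :
      ∫ z, f (ρ + s * z) ∂gaussianReal 0 1 = ∫ y, f y ∂gaussianReal v v := by
    have hs0 : s ≠ 0 := by rintro rfl; exact hρ.ne (by simpa using hs)
    have hvar : (.mk (s ^ 2) (sq_nonneg s) : ℝ≥0) = v := NNReal.eq hs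
    rw [integral_comp_const_add_mul_gaussianReal 0 1 ρ hs0, mul_zero, zero_add, mul_one, hvar]
    rfl
  set T := ∫ y, tanh y ∂gaussianReal v v
  have hsq : √ρ ^ 2 = ρ := sq_sqrt hρ.le
  have h1 : ∫ z, (1 - tanh (ρ + √ρ * z)) ^ 2 ∂gaussianReal 0 1 = 1 - T :=
    (hlaw hsq fun y => (1 - tanh y) ^ 2).trans (integral_one_sub_tanh_sq_gaussianReal_self hv)
  have h2 : ∫ z, (-1 - tanh (-ρ + √ρ * z)) ^ 2 ∂gaussianReal 0 1 = 1 - T := by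
    have hflip (z : ℝ) : (-1 - tanh (-ρ + √ρ * z)) ^ 2 = (1 - tanh (ρ + -√ρ * z)) ^ 2 := by
      rw [show -ρ + √ρ * z = -(ρ + -√ρ * z) by ring, tanh_neg]
      ring
    simp only [hflip]
    exact (hlaw (by rwa [neg_sq]) fun y => (1 - tanh y) ^ 2).trans
      (integral_one_sub_tanh_sq_gaussianReal_self hv)
  have h3 : ∫ z, exp (-z ^ 2 / 2) / √(2 * π) * tanh (ρ + √ρ * z) = T :=
    (integral_gaussianReal_zero_one fun z => tanh (ρ + √ρ * z)).symm.trans (hlaw hsq tanh)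
  have hM : M = 1 - T := by
    simp only [M, h1, h2]
    ring
  rw [hM, h3]
  exact ⟨rfl, by linarith [integral_tanh_lt_one (gaussianReal v v)],
    by linarith [integral_tanh_gaussianReal_self_pos hv]⟩
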